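/- Let P be a finite PIP and J a consistent downset of P. The faces C(I,M) of ⊞_P containing the vertex J (i.e., such that J = I \ X for some X ⊆ M) are in bijection with pairs (X, Y) such that X ⊔ Y is a consistent antichain of P, Y ⊆ max J, and X ⊆ min{x ∈ P \ J : x is consistent with every j ∈ J}. In particular, for J = ∅, the faces containing the root vertex correspond to consistent antichains contained in min P. -/

import Mathlib

/-!
If `J = I \ X` with `X ⊆ M ⊆ max I`, put `Y = M \ X`. Elements of `M` are maximal in the
consistent set `I`, so `X ∪ Y = M` is a consistent antichain, `Y` stays maximal in `J`, and an
element of `X` is minimal among the elements outside `J` consistent with `J`: anything below it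
lies in `I`, hence in `X`, contradicting maximality. Conversely, for such `X` the set `J ∪ X` is a
downset because inconsistency is inherited upwards (an element below `x ∈ X` outside `J` would
still be consistent with `J`), and it is consistent by symmetry of `↮`.
-/

open Finset

variable {P : Type*} [Fintype P] [DecidableEq P] [PartialOrder P]

/-- A subset is consistent if it contains no inconsistent pair. -/
def Consistent (incons : P → P → Prop) (S : Finset P) : Prop :=
  ∀ a ∈ S, ∀ b ∈ S, ¬ incons a b

/-- A downset (order ideal). -/
def IsDownset (I : Finset P) : Prop :=
  ∀ x ∈ I, ∀ y, y ≤ x → y ∈ I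

open Classical in
/-- The maximal elements of a finite set. -/
noncomputable def maxElems (I : Finset P) : Finset P :=
  I.filter (fun x => ∀ y ∈ I, ¬ x < y)

open Classical in
/-- The downset generated by a set. -/
noncomputable def downGen (A : Finset P) : Finset P :=
  Finset.univ.filter (fun x => ∃ a ∈ A, x ≤ a)

/-- A consistent antichain: the faces of the crossing complex `Δ_P`. -/
def ConsAntichain (incons : P → P → Prop) (A : Finset P) : Prop :=
  (∀ a ∈ A, ∀ b ∈ A, a ≠ b → ¬ a ≤ b) ∧ Consistent incons A

/-- A face of the cubical complex `⊞_P`: a pair (I, M) with I a consistent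
downset and M ⊆ max I. -/
def IsFace (incons : P → P → Prop) (I M : Finset P) : Prop :=
  IsDownset I ∧ Consistent incons I ∧ M ⊆ maxElems I

/-- The face-containment order on faces of `⊞_P`:
`C(I',M') ⊆ C(I,M)` iff `M' ⊆ M` and `I \ M ⊆ I' ⊆ I`. -/
def FaceLE (p q : Finset P × Finset P) : Prop :=
  p.2 ⊆ q.2 ∧ q.1 \ q.2 ⊆ p.1 ∧ p.1 ⊆ q.1

open Classical in
/-- The elements of `P \ J` consistent with all of `J`. -/
noncomputable def linkCandidates (incons : P → P → Prop) (J : Finset P) : Finset P :=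
  Finset.univ.filter (fun x => x ∉ J ∧ ∀ j ∈ J, ¬ incons x j)

open Classical in
/-- The minimal elements of a finite set. -/
noncomputable def minElems (S : Finset P) : Finset P :=
  S.filter (fun x => ∀ y ∈ S, ¬ y < x)

section Link

variable {incons : P → P → Prop}

@[simp]
theorem mem_maxElems {I : Finset P} {x : P} :
    x ∈ maxElems I ↔ x ∈ I ∧ ∀ y ∈ I, ¬ x < y := by
  classical
  simp [maxElems]

@[simp]
theorem mem_minElems {S : Finset P} {x : P} :
    x ∈ minElems S ↔ x ∈ S ∧ ∀ y ∈ S, ¬ y < x := by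
  classical
  simp [minElems]

omit [PartialOrder P] in
@[simp]
theorem mem_linkCandidates {J : Finset P} {x : P} :
    x ∈ linkCandidates incons J ↔ x ∉ J ∧ ∀ j ∈ J, ¬ incons x j := by
  classical
  simp [linkCandidates]

omit [Fintype P] [DecidableEq P] [PartialOrder P] in
theorem Consistent.mono {S T : Finset P} (hT : Consistent incons T) (hST : S ⊆ T) :
    Consistent incons S :=
  fun a ha b hb => hT a (hST ha) b (hST hb)

theorem maxElems_subset (I : Finset P) : maxElems I ⊆ I :=
  fun _ hx => (mem_maxElems.mp hx).1

theorem minElems_subset (S : Finset P) : minElems S ⊆ S :=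
  fun _ hx => (mem_minElems.mp hx).1

theorem sdiff_subset_maxElems_sdiff {I M : Finset P} (hM : M ⊆ maxElems I) (X : Finset P) :
    M \ X ⊆ maxElems (I \ X) := by
  intro m hm
  obtain ⟨hmM, hmX⟩ := mem_sdiff.mp hm
  obtain ⟨hmI, hmMax⟩ := mem_maxElems.mp (hM hmM)
  exact mem_maxElems.mpr ⟨mem_sdiff.mpr ⟨hmI, hmX⟩, fun z hz => hmMax z (mem_sdiff.mp hz).1⟩

theorem consAntichain_of_subset_maxElems {I M : Finset P} (hIc : Consistent incons I)
    (hM : M ⊆ maxElems I) : ConsAntichain incons M := by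
  have hMI : M ⊆ I := hM.trans (maxElems_subset I)
  refine ⟨fun a ha b hb hne hle => ?_, hIc.mono hMI⟩
  exact (mem_maxElems.mp (hM ha)).2 b (hMI hb) (lt_of_le_of_ne hle hne)

theorem subset_minElems_linkCandidates_sdiff {I X : Finset P} (hI : IsDownset I)
    (hIc : Consistent incons I) (hX : X ⊆ maxElems I) :
    X ⊆ minElems (linkCandidates incons (I \ X)) := by
  intro x hx
  have hxI : x ∈ I := maxElems_subset I (hX hx)
  refine mem_minElems.mpr ⟨?_, fun y hy hyx => ?_⟩
  · refine mem_linkCandidates.mpr ⟨fun h => (mem_sdiff.mp h).2 hx, fun j hj => ?_⟩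
    exact hIc x hxI j (mem_sdiff.mp hj).1
  · have hyI : y ∈ I := hI x hxI y hyx.le
    have hyX : y ∈ X := by
      by_contra hyX
      exact (mem_linkCandidates.mp hy).1 (mem_sdiff.mpr ⟨hyI, hyX⟩)
    exact (mem_maxElems.mp (hX hyX)).2 x hxI hyx

theorem isDownset_union_of_subset_minElems
    (hup : ∀ a b a', incons a b → a ≤ a' → incons a' b) {J X : Finset P} (hJ : IsDownset J)
    (hX : X ⊆ minElems (linkCandidates incons J)) : IsDownset (J ∪ X) := by
  intro z hz y hyz
  rcases mem_union.mp hz with hzJ | hzX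
  · exact mem_union_left X (hJ z hzJ y hyz)
  rcases hyz.eq_or_lt with rfl | hlt
  · exact hz
  obtain ⟨hzLink, hzMin⟩ := mem_minElems.mp (hX hzX)
  by_contra hy
  refine hzMin y (mem_linkCandidates.mpr ⟨fun hyJ => hy (mem_union_left X hyJ), ?_⟩) hlt
  exact fun j hj hyj => (mem_linkCandidates.mp hzLink).2 j hj (hup y j z hyj hlt.le)

omit [PartialOrder P] in
theorem consistent_union_of_subset_linkCandidates (hsymm : ∀ a b, incons a b → incons b a)
    {J X : Finset P} (hJc : Consistent incons J) (hXc : Consistent incons X)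
    (hX : X ⊆ linkCandidates incons J) : Consistent incons (J ∪ X) := by
  have hlink : ∀ x ∈ X, ∀ j ∈ J, ¬ incons x j := fun x hx => (mem_linkCandidates.mp (hX hx)).2
  intro a ha b hb
  rcases mem_union.mp ha with haJ | haX <;> rcases mem_union.mp hb with hbJ | hbX
  · exact hJc a haJ b hbJ
  · exact fun h => hlink b hbX a haJ (hsymm a b h)
  · exact hlink a haX b hbJ
  · exact hXc a haX b hbX

theorem union_subset_maxElems_union {J X Y : Finset P} (hJ : IsDownset J)
    (hXY : ConsAntichain incons (X ∪ Y)) (hY : Y ⊆ maxElems J)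
    (hX : X ⊆ linkCandidates incons J) : X ∪ Y ⊆ maxElems (J ∪ X) := by
  intro m hm
  have hmNotBelowX : ∀ z ∈ X, ¬ m < z := fun z hz hlt =>
    hXY.1 m hm z (mem_union_left Y hz) hlt.ne hlt.le
  rcases mem_union.mp hm with hmX | hmY
  · refine mem_maxElems.mpr ⟨mem_union_right J hmX, fun z hz hlt => ?_⟩
    rcases mem_union.mp hz with hzJ | hzX
    · exact (mem_linkCandidates.mp (hX hmX)).1 (hJ z hzJ m hlt.le)
    · exact hmNotBelowX z hzX hlt
  · obtain ⟨hmJ, hmMax⟩ := mem_maxElems.mp (hY hmY)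
    refine mem_maxElems.mpr ⟨mem_union_left X hmJ, fun z hz hlt => ?_⟩
    rcases mem_union.mp hz with hzJ | hzX
    · exact hmMax z hzJ hlt
    · exact hmNotBelowX z hzX hlt

end Link

theorem faces_containing_vertex_general (incons : P → P → Prop)
    (hsymm : ∀ a b, incons a b → incons b a)
    (hup : ∀ a b a' b', incons a b → a ≤ a' → b ≤ b' → incons a' b')
    (J : Finset P) (hJ : IsDownset J) (hJc : Consistent incons J) :
    ∀ I M : Finset P,
      (IsFace incons I M ∧ ∃ X ⊆ M, J = I \ X) ↔
      (∃ X Y : Finset P,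
        Disjoint X Y ∧
        ConsAntichain incons (X ∪ Y) ∧
        Y ⊆ maxElems J ∧
        X ⊆ minElems (linkCandidates incons J) ∧
        I = J ∪ X ∧ M = X ∪ Y) := by
  intro I M
  constructor
  · rintro ⟨⟨hI, hIc, hM⟩, X, hXM, rfl⟩
    refine ⟨X, M \ X, disjoint_sdiff, ?_, sdiff_subset_maxElems_sdiff hM X, ?_, ?_, ?_⟩
    · rw [union_sdiff_of_subset hXM]
      exact consAntichain_of_subset_maxElems hIc hM
    · exact subset_minElems_linkCandidates_sdiff hI hIc (hXM.trans hM)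
    · rw [sdiff_union_of_subset (hXM.trans (hM.trans (maxElems_subset I)))]
    · rw [union_sdiff_of_subset hXM]
  · rintro ⟨X, Y, -, hXY, hY, hX, rfl, rfl⟩
    have hXlink : X ⊆ linkCandidates incons J := hX.trans (minElems_subset _)
    have hJX : Disjoint J X :=
      disjoint_right.mpr fun x hx => (mem_linkCandidates.mp (hXlink hx)).1
    refine ⟨⟨?_, ?_, ?_⟩, X, subset_union_left, (union_sdiff_cancel_right hJX).symm⟩
    · exact isDownset_union_of_subset_minElems (fun a b a' h ha => hup a b a' b h ha le_rfl) hJ hX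
    · exact consistent_union_of_subset_linkCandidates hsymm hJc
        (hXY.2.mono subset_union_left) hXlink
    · exact union_subset_maxElems_union hJ hXY hY hXlink

/-- Description of the link of a vertex of `⊞_P`: the faces `C(I,M)`
containing the vertex corresponding to the consistent downset `J` are in
bijection with pairs `(X, Y)` such that `X ⊔ Y` is a consistent antichain,
`Y ⊆ max J`, and `X ⊆ min { x ∈ P \ J : x consistent with all of J }`. -/
theorem faces_containing_vertex (incons : P → P → Prop)
    (hirr : ∀ a, ¬ incons a a)
    (hsymm : ∀ a b, incons a b → incons b a)
    (hup : ∀ a b a' b', incons a b → a ≤ a' → b ≤ b' → incons a' b')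
    (J : Finset P) (hJ : IsDownset J) (hJc : Consistent incons J) :
    ∀ I M : Finset P,
      (IsFace incons I M ∧ ∃ X ⊆ M, J = I \ X) ↔
      (∃ X Y : Finset P,
        Disjoint X Y ∧
        ConsAntichain incons (X ∪ Y) ∧
        Y ⊆ maxElems J ∧
        X ⊆ minElems (linkCandidates incons J) ∧
        I = J ∪ X ∧ M = X ∪ Y) :=
  faces_containing_vertex_general incons hsymm hup J hJ hJc
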